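/- For any DAG G in which i₂* ∈ P(i₁*), the 2-influential set can be written as {i_1, i_2, …, i_m} ordered by decreasing rank, where i_1 = i₁*, i_2 = i₂*, and i_{t+1} ∈ P(i_t) for all t < m. -/

import Mathlib

/-!
Listed by decreasing rank, the 2-influential nodes form a chain for reachability. A
2-influential `j ≠ i₁*` is not a sink: `i₂*` reaches `i₁*`, and any other `j` reaches `i₁*` or
`i₂*`, since otherwise both would still outrank `j` once `j` drops her out-edges. If such a `j`
outranks a 2-influential `i ∉ P(j)` and reaches `k ≠ j`, then once `i` drops her out-edges both
`j` and `k` outrank her, as `P(j)` is untouched and survives strictly inside the new `P(k)`.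
Below `i₁*` one uses `P(i₂*) ⊆ P(i₁*)`.
-/
attribute [local instance] Classical.propDecidable

/-- The progeny of node `i`: all nodes with a directed path to `i`, including `i`. -/
noncomputable def progeny {n : ℕ} (E : Finset (Fin n × Fin n)) (i : Fin n) : Finset (Fin n) :=
  Finset.univ.filter (fun j => Relation.ReflTransGen (fun u v => (u, v) ∈ E) j i)

/-- The graph is acyclic. -/
def Acyclic {n : ℕ} (E : Finset (Fin n × Fin n)) : Prop :=
  ∀ i : Fin n, ¬ Relation.TransGen (fun u v => (u, v) ∈ E) i i

/-- `Prec E i j` means `i ≻ j` : larger progeny, ties broken by larger index. -/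
def Prec {n : ℕ} (E : Finset (Fin n × Fin n)) (i j : Fin n) : Prop :=
  (progeny E j).card < (progeny E i).card ∨
    ((progeny E j).card = (progeny E i).card ∧ j < i)

/-- Delete all out-edges of node `i`. -/
noncomputable def delOut {n : ℕ} (E : Finset (Fin n × Fin n)) (i : Fin n) :
    Finset (Fin n × Fin n) := E.filter (fun e => e.1 ≠ i)

/-- `i` is in the `k`-influential set: fewer than `k` nodes outrank `i`
after `i` deletes all her out-edges. -/
noncomputable def Influential {n : ℕ} (k : ℕ) (E : Finset (Fin n × Fin n)) (i : Fin n) : Prop :=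
  (Finset.univ.filter (fun j => Prec (delOut E i) j i)).card < k

open Relation

theorem Finset.exists_enum_of_isStrictTotalOrder {α : Type*} (r : α → α → Prop)
    [IsStrictTotalOrder α r] (s : Finset α) :
    ∃ f : Fin s.card → α, (∀ x, x ∈ s ↔ ∃ t, f t = x) ∧ ∀ t u, t < u → r (f t) (f u) := by
  classical
  let := linearOrderOfSTO r
  refine ⟨s.orderEmbOfFin rfl, fun x => ?_, fun t u htu => (s.orderEmbOfFin rfl).strictMono htu⟩
  rw [← Set.mem_range, s.range_orderEmbOfFin rfl, Finset.mem_coe]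

theorem apply_eq_of_le_of_rel {α : Type*} {r : α → α → Prop} [Std.Asymm r] {m : ℕ}
    {f : Fin m → α} (hf : ∀ t u, t < u → r (f t) (f u)) {k t : Fin m} (hkt : k ≤ t)
    (h : f k ≠ f t → r (f t) (f k)) : f k = f t := by
  by_contra hne
  exact asymm (hf k t (lt_of_le_of_ne hkt fun h => hne (congrArg f h))) (h hne)

def Edge {n : ℕ} (E : Finset (Fin n × Fin n)) (u v : Fin n) : Prop := (u, v) ∈ E

noncomputable def outrankers {n : ℕ} (E : Finset (Fin n × Fin n)) (i : Fin n) : Finset (Fin n) :=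
  Finset.univ.filter (fun j => Prec E j i)

section

variable {n : ℕ} {E : Finset (Fin n × Fin n)}

theorem mem_progeny {i j : Fin n} : j ∈ progeny E i ↔ ReflTransGen (Edge E) j i := by
  simp only [progeny, Finset.mem_filter, Finset.mem_univ, true_and]
  rfl

theorem progeny_subset_of_reflTransGen {i j : Fin n} (h : ReflTransGen (Edge E) i j) :
    progeny E i ⊆ progeny E j :=
  fun _ ha => mem_progeny.2 ((mem_progeny.1 ha).trans h)

theorem Acyclic.eq_of_reflTransGen (hE : Acyclic E) {a b : Fin n}
    (hab : ReflTransGen (Edge E) a b) (hba : ReflTransGen (Edge E) b a) : a = b := by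
  rcases hab.cases_head with h | ⟨c, hac, hcb⟩
  · exact h
  · exact absurd (TransGen.head' hac (hcb.trans hba)) (hE a)

theorem Acyclic.eq_of_reflTransGen_of_card_progeny_le (hE : Acyclic E) {j k : Fin n}
    (hjk : ReflTransGen (Edge E) j k) (hcard : (progeny E k).card ≤ (progeny E j).card) :
    j = k := by
  have heq := Finset.eq_of_subset_of_card_le (progeny_subset_of_reflTransGen hjk) hcard
  exact hE.eq_of_reflTransGen hjk (mem_progeny.1 (heq ▸ mem_progeny.2 .refl))

theorem edge_delOut {i u v : Fin n} : Edge (delOut E i) u v ↔ Edge E u v ∧ u ≠ i := by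
  simp [Edge, delOut]

theorem edge_delOut_le (i : Fin n) : Edge (delOut E i) ≤ Edge E :=
  fun _ _ huv => (edge_delOut.1 huv).1

theorem acyclic_delOut (hE : Acyclic E) (i : Fin n) : Acyclic (delOut E i) :=
  fun a h => hE a (TransGen.mono (edge_delOut_le i) a a h)

theorem reflTransGen_delOut {i a b : Fin n} (h : ReflTransGen (Edge E) a b)
    (hi : ¬ (ReflTransGen (Edge E) a i ∧ TransGen (Edge E) i b)) :
    ReflTransGen (Edge (delOut E i)) a b := by
  induction h using ReflTransGen.head_induction_on with
  | refl => exact .refl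
  | head hac hcb ih =>
    refine .head (edge_delOut.2 ⟨hac, ?_⟩) (ih fun ⟨hci, hib⟩ => hi ⟨.head hac hci, hib⟩)
    rintro rfl
    exact hi ⟨.refl, .head' hac hcb⟩

theorem progeny_delOut_subset (i j : Fin n) : progeny (delOut E i) j ⊆ progeny E j :=
  fun a ha => mem_progeny.2 (ReflTransGen.mono (edge_delOut_le i) a j (mem_progeny.1 ha))

theorem progeny_delOut_of_not_reflTransGen {i j : Fin n} (hij : ¬ ReflTransGen (Edge E) i j) :
    progeny (delOut E i) j = progeny E j :=
  (progeny_delOut_subset i j).antisymm fun _ ha => mem_progeny.2 <|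
    reflTransGen_delOut (mem_progeny.1 ha) fun ⟨_, hj⟩ => hij hj.to_reflTransGen

theorem Acyclic.progeny_delOut_self (hE : Acyclic E) (i : Fin n) :
    progeny (delOut E i) i = progeny E i :=
  (progeny_delOut_subset i i).antisymm fun _ ha => mem_progeny.2 <|
    reflTransGen_delOut (mem_progeny.1 ha) fun ⟨_, hi⟩ => hE i hi

instance (E : Finset (Fin n × Fin n)) : IsStrictTotalOrder (Fin n) (Prec E) where
  irrefl i h := by simp only [Prec] at h; omega
  trans i j k hij hjk := by simp only [Prec, Fin.lt_def] at *; omega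
  trichotomous i j hij hji := Fin.ext (by simp only [Prec, Fin.lt_def] at hij hji; omega)

theorem card_progeny_le_of_prec {i j : Fin n} (h : Prec E j i) :
    (progeny E i).card ≤ (progeny E j).card := by
  rcases h with h | h <;> omega

theorem card_progeny_le_of_not_prec {i j : Fin n} (h : ¬ Prec E j i) :
    (progeny E j).card ≤ (progeny E i).card := by
  simp only [Prec, not_or] at h; omega

theorem Acyclic.prec_of_prec_delOut (hE : Acyclic E) {i j : Fin n}
    (h : Prec (delOut E i) j i) : Prec E j i := by
  have hj := Finset.card_le_card (progeny_delOut_subset (E := E) i j)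
  simp only [Prec, hE.progeny_delOut_self] at h ⊢
  omega

theorem Acyclic.prec_delOut_of_not_reflTransGen (hE : Acyclic E) {i j : Fin n}
    (h : Prec E j i) (hij : ¬ ReflTransGen (Edge E) i j) : Prec (delOut E i) j i := by
  rwa [Prec, hE.progeny_delOut_self, progeny_delOut_of_not_reflTransGen hij]

theorem Acyclic.influential_of_card_outrankers_lt (hE : Acyclic E) {k : ℕ} {i : Fin n}
    (h : (outrankers E i).card < k) : Influential k E i :=
  lt_of_le_of_lt (Finset.card_le_card fun j hj => by
    simp only [outrankers, Finset.mem_filter, Finset.mem_univ, true_and] at hj ⊢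
    exact hE.prec_of_prec_delOut hj) h

theorem not_influential_two_of_prec_delOut {i j k : Fin n} (hjk : j ≠ k)
    (hj : Prec (delOut E i) j i) (hk : Prec (delOut E i) k i) : ¬ Influential 2 E i := by
  have : {j, k} ⊆ outrankers (delOut E i) i := by
    simp [Finset.insert_subset_iff, outrankers, hj, hk]
  have := Finset.card_le_card this
  rw [Finset.card_pair hjk] at this
  exact this.not_gt

theorem Acyclic.mem_progeny_of_influential_of_transGen (hE : Acyclic E) {i j k : Fin n}
    (hi : Influential 2 E i) (hji : Prec E j i) (hjk : TransGen (Edge E) j k) :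
    i ∈ progeny E j := by
  rw [mem_progeny]
  by_contra hij
  have hji' : ¬ ReflTransGen (Edge E) j i := fun h =>
    irrefl i (hE.eq_of_reflTransGen_of_card_progeny_le h (card_progeny_le_of_prec hji) ▸ hji)
  have hkne : k ≠ j := fun h => hE j (h ▸ hjk)
  have hk : ¬ Prec (delOut E i) k i := fun hk => not_influential_two_of_prec_delOut hkne.symm
    (hE.prec_delOut_of_not_reflTransGen hji hij) hk hi
  have hjk' : ReflTransGen (Edge (delOut E i)) j k :=
    reflTransGen_delOut hjk.to_reflTransGen fun ⟨h, _⟩ => hji' h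
  refine hkne ((acyclic_delOut hE i).eq_of_reflTransGen_of_card_progeny_le hjk' ?_).symm
  calc (progeny (delOut E i) k).card ≤ (progeny (delOut E i) i).card :=
        card_progeny_le_of_not_prec hk
    _ = (progeny E i).card := by rw [hE.progeny_delOut_self]
    _ ≤ (progeny E j).card := card_progeny_le_of_prec hji
    _ = (progeny (delOut E i) j).card := by rw [progeny_delOut_of_not_reflTransGen hij]

theorem outrankers_subset {i : Fin n} {s : Finset (Fin n)}
    (h : ∀ j, j ∉ s → j ≠ i → Prec E i j) : outrankers E i ⊆ s := by
  intro j hj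
  simp only [outrankers, Finset.mem_filter, Finset.mem_univ, true_and] at hj
  by_contra hjs
  exact asymm hj (h j hjs fun hji => irrefl i (hji ▸ hj))

theorem Acyclic.influential_two_of_forall_prec (hE : Acyclic E) {i1 : Fin n}
    (hi1 : ∀ j, j ≠ i1 → Prec E i1 j) : Influential 2 E i1 :=
  hE.influential_of_card_outrankers_lt <| by
    simp [Finset.subset_empty.1 (outrankers_subset (s := ∅) fun j _ => hi1 j)]

theorem Acyclic.influential_two_of_forall_ne_prec (hE : Acyclic E) {i1 i2 : Fin n}
    (hi2 : ∀ j, j ≠ i1 → j ≠ i2 → Prec E i2 j) : Influential 2 E i2 :=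
  hE.influential_of_card_outrankers_lt <| lt_of_le_of_lt
    (Finset.card_le_card (outrankers_subset (s := {i1}) fun j hj => hi2 j (by simpa using hj)))
    (by simp)

theorem Acyclic.reflTransGen_top_of_influential (hE : Acyclic E) {i1 i2 j : Fin n}
    (h12 : i1 ≠ i2) (hi1 : ∀ j, j ≠ i1 → Prec E i1 j)
    (hi2 : ∀ j, j ≠ i1 → j ≠ i2 → Prec E i2 j) (hj : Influential 2 E j)
    (hj1 : j ≠ i1) (hj2 : j ≠ i2) :
    ReflTransGen (Edge E) j i1 ∨ ReflTransGen (Edge E) j i2 := by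
  by_contra! h
  exact not_influential_two_of_prec_delOut h12
    (hE.prec_delOut_of_not_reflTransGen (hi1 j hj1) h.1)
    (hE.prec_delOut_of_not_reflTransGen (hi2 j hj1 hj2) h.2) hj

theorem Acyclic.exists_transGen_of_influential (hE : Acyclic E) {i1 i2 j : Fin n}
    (h12 : i1 ≠ i2) (hi1 : ∀ j, j ≠ i1 → Prec E i1 j)
    (hi2 : ∀ j, j ≠ i1 → j ≠ i2 → Prec E i2 j) (h2in1 : i2 ∈ progeny E i1)
    (hj : Influential 2 E j) (hj1 : j ≠ i1) : ∃ k, TransGen (Edge E) j k := by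
  have hreach : ∃ k ≠ j, ReflTransGen (Edge E) j k := by
    by_cases hj2 : j = i2
    · exact ⟨i1, Ne.symm hj1, hj2 ▸ mem_progeny.1 h2in1⟩
    · rcases hE.reflTransGen_top_of_influential h12 hi1 hi2 hj hj1 hj2 with h | h
      · exact ⟨i1, Ne.symm hj1, h⟩
      · exact ⟨i2, Ne.symm hj2, h⟩
  obtain ⟨k, hkj, hjk⟩ := hreach
  exact ⟨k, (reflTransGen_iff_eq_or_transGen.1 hjk).resolve_left hkj⟩

theorem Acyclic.mem_progeny_of_influential (hE : Acyclic E) {i1 i2 i j : Fin n}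
    (h12 : i1 ≠ i2) (hi1 : ∀ j, j ≠ i1 → Prec E i1 j)
    (hi2 : ∀ j, j ≠ i1 → j ≠ i2 → Prec E i2 j) (h2in1 : i2 ∈ progeny E i1)
    (hi : Influential 2 E i) (hj : Influential 2 E j) (hji : Prec E j i) :
    i ∈ progeny E j := by
  have below_of_ne_top : ∀ j, Influential 2 E j → j ≠ i1 → Prec E j i → i ∈ progeny E j :=
    fun j hj hj1 hji =>
      let ⟨_, hjk⟩ := hE.exists_transGen_of_influential h12 hi1 hi2 h2in1 hj hj1
      hE.mem_progeny_of_influential_of_transGen hi hji hjk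
  by_cases hj1 : j = i1
  · subst hj1
    by_cases hi2' : i = i2
    · exact hi2' ▸ h2in1
    · have hij : i ≠ j := ne_of_irrefl' hji
      exact progeny_subset_of_reflTransGen (mem_progeny.1 h2in1) <| below_of_ne_top i2
        (hE.influential_two_of_forall_ne_prec hi2) h12.symm (hi2 i hij hi2')
  · exact below_of_ne_top j hj hj1 hji

end

/-- if i₂* ∈ P(i₁*), the 2-influential set can be ordered decreasingly
as i₁, i₂, …, i_m with i₁ = i₁*, i₂ = i₂*, and i_{t+1} ∈ P(i_t) for all t < m. -/
theorem stmt10 {n : ℕ} (E : Finset (Fin n × Fin n)) (hE : Acyclic E)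
    (i1 i2 : Fin n) (h12 : i1 ≠ i2)
    (hi1 : ∀ j : Fin n, j ≠ i1 → Prec E i1 j)
    (hi2 : ∀ j : Fin n, j ≠ i1 → j ≠ i2 → Prec E i2 j)
    (h2in1 : i2 ∈ progeny E i1) :
    ∃ m : ℕ, ∃ _ : 2 ≤ m, ∃ f : Fin m → Fin n,
      (∀ i : Fin n, Influential 2 E i ↔ ∃ t : Fin m, f t = i) ∧
      (∀ t s : Fin m, t < s → Prec E (f t) (f s)) ∧
      f ⟨0, by omega⟩ = i1 ∧ f ⟨1, by omega⟩ = i2 ∧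
      (∀ t : Fin m, ∀ h : (t : ℕ) + 1 < m,
        f ⟨(t : ℕ) + 1, h⟩ ∈ progeny E (f t)) := by
  set S := Finset.univ.filter (Influential 2 E)
  obtain ⟨f, hfS, hf⟩ := S.exists_enum_of_isStrictTotalOrder (Prec E)
  have hS : ∀ i, Influential 2 E i ↔ ∃ t, f t = i := fun i => by simpa [S] using hfS i
  have hinf1 := hE.influential_two_of_forall_prec hi1
  have hinf2 := hE.influential_two_of_forall_ne_prec hi2
  have hm : 2 ≤ S.card := Finset.one_lt_card.2 ⟨i1, by simpa [S], i2, by simpa [S], h12⟩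
  obtain ⟨t1, rfl⟩ := (hS _).1 hinf1
  obtain ⟨t2, rfl⟩ := (hS _).1 hinf2
  have hf0 : f ⟨0, by omega⟩ = f t1 := apply_eq_of_le_of_rel hf (Nat.zero_le _) (hi1 _)
  have ht2 : (1 : ℕ) ≤ t2 :=
    Nat.one_le_iff_ne_zero.2 fun h => h12 (hf0 ▸ congrArg f (Fin.ext h.symm))
  have hf1 : f ⟨1, by omega⟩ = f t2 := apply_eq_of_le_of_rel hf ht2 <| hi2 _ <|
    hf0 ▸ ne_of_irrefl' (hf ⟨0, by omega⟩ ⟨1, by omega⟩ Nat.zero_lt_one)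
  refine ⟨S.card, hm, f, hS, hf, hf0, hf1, fun t h => ?_⟩
  exact hE.mem_progeny_of_influential h12 hi1 hi2 h2in1 ((hS _).2 ⟨_, rfl⟩) ((hS _).2 ⟨_, rfl⟩)
    (hf _ _ (Nat.lt_succ_self _))
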